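/- Under the time-limited two-state discrimination setup with arbitrary priors, P_succ ≤ p_max + (γt/2)·[tr(H·|p_min ρ̃_min - p_max ρ̃_max|) + p_min tr(H ρ̃_min) - p_max tr(H ρ̃_max)], where ρ̃ₓ = ρₓ ⊗ |x_max⟩⟨x_max| and H ≥ 0. -/

import Mathlib

open Matrix ComplexOrder

/-- The positive part `A⁺` of a Hermitian matrix `A`, obtained from its spectral
decomposition by keeping only the nonnegative eigenvalues. -/
noncomputable def posPart' {ι : Type*} [Fintype ι] [DecidableEq ι]
    (A : Matrix ι ι ℂ) (hA : A.IsHermitian) : Matrix ι ι ℂ :=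
  (hA.eigenvectorUnitary : Matrix ι ι ℂ) *
    Matrix.diagonal (fun i => ((max (hA.eigenvalues i) 0 : ℝ) : ℂ)) *
    star (hA.eigenvectorUnitary : Matrix ι ι ℂ)

/-- The absolute value `|A|` of a Hermitian matrix `A`, obtained from its spectral
decomposition by taking absolute values of the eigenvalues. -/
noncomputable def absPart' {ι : Type*} [Fintype ι] [DecidableEq ι]
    (A : Matrix ι ι ℂ) (hA : A.IsHermitian) : Matrix ι ι ℂ :=
  (hA.eigenvectorUnitary : Matrix ι ι ℂ) *
    Matrix.diagonal (fun i => ((|hA.eigenvalues i| : ℝ) : ℂ)) *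
    star (hA.eigenvectorUnitary : Matrix ι ι ℂ)
open Kronecker

/-- The ancilla projector `|x⟩⟨x|` on the two-dimensional ancilla. -/
noncomputable def ancProj (x : Fin 2) : Matrix (Fin 2) (Fin 2) ℂ :=
  Matrix.single x x 1

/-- `ρ̃ = ρ ⊗ |x_max⟩⟨x_max|` with the ancilla initialized to `|x_max⟩ = |0⟩`. -/
noncomputable def tilde {d : ℕ} (ρ : Matrix (Fin d) (Fin d) ℂ) :
    Matrix (Fin d × Fin 2) (Fin d × Fin 2) ℂ :=
  ρ ⊗ₖ ancProj 0

/-!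
Write `A = p_min ρ̃_min - p_max ρ̃_max` and `Π₁ = 1 ⊗ |1⟩⟨1|`. Since `Π₀ = 1 - Π₁` and `U` is
unitary, the success probability equals `p_max + tr(Π₁ U A U†)`. Dropping the negative part of `A`
gives `tr(Π₁ U A U†) ≤ tr(Π₁ U A⁺ U†)`, and because `Π₁ A = 0` forces `Π₁ A⁺ = A⁺ Π₁ = 0` the
unitary may be replaced by `U - 1`: the bound becomes `tr(Π₁ (U - 1) A⁺ (U - 1)†) ≤
tr(A⁺ (U - 1)†(U - 1))`. In the eigenbasis of `H`, `(U - 1)†(U - 1)` is diagonal with entries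
`2 - 2 cos(t Eₙ) ≤ γ t Eₙ`, so the last trace is at most `γ t tr(H A⁺)`, and
`2 A⁺ = |A| + A` turns this into the stated bracket.
-/

namespace Real

lemma two_sub_two_cos_le_sq_sub (x : ℝ) (hx : x ^ 2 ≤ 8) : 2 - 2 * cos x ≤ x ^ 2 - x ^ 4 / 16 := by
  have hdouble : cos x = 2 * cos (x / 2) ^ 2 - 1 := by rw [← cos_two_mul]; ring_nf
  have hhalf : 1 - x ^ 2 / 8 ≤ cos (x / 2) := by
    have := one_sub_sq_div_two_le_cos (x := x / 2); linarith
  have hsq : (1 - x ^ 2 / 8) ^ 2 ≤ cos (x / 2) ^ 2 := pow_le_pow_left₀ (by linarith) hhalf 2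
  nlinarith

lemma two_sub_two_cos_le_four_sub (x : ℝ) (h0 : 0 ≤ x) (h2π : x ≤ 2 * π) :
    2 - 2 * cos x ≤ 4 - 4 * (x / π - 1) ^ 2 := by
  have h := cos_le_one_sub_mul_cos_sq (x := x - π) (abs_le.2 ⟨by linarith, by linarith⟩)
  have hscale : 2 / π ^ 2 * (x - π) ^ 2 = 2 * (x / π - 1) ^ 2 := by field_simp
  rw [cos_sub_pi, hscale] at h
  linarith

lemma two_sub_two_cos_le_five_div_pi_mul {x : ℝ} (hx : 0 ≤ x) : 2 - 2 * cos x ≤ 5 / π * x := by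
  have hπ : 1.55 ≤ 5 / π := by rw [le_div_iff₀ pi_pos]; linarith [pi_lt_d2]
  rcases le_or_gt (x ^ 2) 8 with hx8 | hx8
  · -- `x - x ^ 3 / 16` peaks at `x = 4 / √3 ≈ 2.31`, with value `8 / (3 √3) ≈ 1.54`.
    have hcubic : x - x ^ 3 / 16 ≤ 1.55 := by
      nlinarith [mul_nonneg (sq_nonneg (x - 2.31)) (by linarith : (0 : ℝ) ≤ x + 4.62)]
    nlinarith [two_sub_two_cos_le_sq_sub x hx8]
  · have hx28 : 2.8 ≤ x := by nlinarith
    nlinarith [neg_one_le_cos x]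

lemma two_sub_two_cos_le_three_div_pi_mul {x : ℝ} (hx : 0 ≤ x) (hgap : ¬(1 < x ∧ x < 4)) :
    2 - 2 * cos x ≤ 3 / π * x := by
  have hπ : 15 / 16 ≤ 3 / π := by rw [le_div_iff₀ pi_pos]; linarith [pi_lt_d2]
  rcases le_or_gt x 1 with hx1 | hx1
  · have hcubic : x - x ^ 3 / 16 ≤ 15 / 16 := by
      nlinarith [mul_nonneg (by linarith : (0 : ℝ) ≤ 1 - x)
        (by nlinarith : (0 : ℝ) ≤ 15 - x - x ^ 2)]
    nlinarith [two_sub_two_cos_le_sq_sub x (by nlinarith)]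
  have hx4 : 4 ≤ x := by by_contra h; exact hgap ⟨hx1, by linarith⟩
  have hlin : 3 / π * x = 3 * (x / π) := by ring
  rcases le_or_gt x (2 * π) with h2π | h2π
  · have hu : 5 / 4 ≤ x / π := by rw [le_div_iff₀ pi_pos]; linarith [pi_lt_d2]
    nlinarith [two_sub_two_cos_le_four_sub x hx h2π]
  · have hu : 2 ≤ x / π := by rw [le_div_iff₀ pi_pos]; linarith
    linarith [neg_one_le_cos x]

lemma two_sub_two_cos_le_ite_mul {ι : Type*} {x : ι → ℝ} [Decidable (∃ n, 1 < x n ∧ x n < 4)]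
    (hx : ∀ n, 0 ≤ x n) (k : ι) :
    2 - 2 * cos (x k) ≤ (if ∃ n, 1 < x n ∧ x n < 4 then 5 / π else 3 / π) * x k := by
  split_ifs with hgap
  · exact two_sub_two_cos_le_five_div_pi_mul (hx k)
  · exact two_sub_two_cos_le_three_div_pi_mul (hx k) fun hk => hgap ⟨k, hk⟩

end Real

lemma Complex.conj_mul_self_exp_sub_one (θ : ℝ) :
    starRingEnd ℂ (exp (θ * I) - 1) * (exp (θ * I) - 1) = ((2 - 2 * Real.cos θ : ℝ) : ℂ) := by
  rw [mul_comm, mul_conj, ofReal_inj, normSq_apply]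
  simp only [sub_re, sub_im, exp_ofReal_mul_I_re, exp_ofReal_mul_I_im, one_re, one_im]
  nlinarith [Real.sin_sq_add_cos_sq θ]

lemma Complex.conj_mul_self_exp_ofReal_mul_I (θ : ℝ) :
    starRingEnd ℂ (exp (θ * I)) * exp (θ * I) = 1 := by
  rw [mul_comm, mul_conj, normSq_eq_norm_sq, norm_exp_ofReal_mul_I, one_pow, ofReal_one]

section MatrixOrder

open scoped MatrixOrder
open Unitary

variable {ι : Type*} [Fintype ι] [DecidableEq ι]

lemma posPart'_eq_cfc (A : Matrix ι ι ℂ) (hA : A.IsHermitian) :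
    posPart' A hA = cfc (fun x : ℝ => max x 0) A := by
  rw [hA.cfc_eq]; rfl

lemma absPart'_eq_cfc (A : Matrix ι ι ℂ) (hA : A.IsHermitian) :
    absPart' A hA = cfc (fun x : ℝ => |x|) A := by
  rw [hA.cfc_eq]; rfl

lemma absPart'_add_self (A : Matrix ι ι ℂ) (hA : A.IsHermitian) :
    absPart' A hA + A = posPart' A hA + posPart' A hA := by
  calc absPart' A hA + A = cfc (fun x : ℝ => |x| + x) A := by
        rw [cfc_add (a := A) (fun x : ℝ => |x|) (fun x => x), cfc_id' ℝ A hA.isSelfAdjoint,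
          absPart'_eq_cfc]
    _ = cfc (fun x : ℝ => max x 0 + max x 0) A := cfc_congr fun x _ => by
        rcases le_total x 0 with h | h <;> simp [abs_of_nonpos, abs_of_nonneg, h]
    _ = posPart' A hA + posPart' A hA := by
        rw [cfc_add (a := A) (fun x : ℝ => max x 0) (fun x => max x 0), posPart'_eq_cfc]

lemma posPart'_nonneg (A : Matrix ι ι ℂ) (hA : A.IsHermitian) : 0 ≤ posPart' A hA := by
  rw [posPart'_eq_cfc]; exact cfc_nonneg fun x _ => le_max_right x 0

lemma posPart'_le_absPart' (A : Matrix ι ι ℂ) (hA : A.IsHermitian) :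
    posPart' A hA ≤ absPart' A hA := by
  rw [posPart'_eq_cfc, absPart'_eq_cfc]
  exact cfc_mono fun x _ => max_le (le_abs_self x) (abs_nonneg x)

lemma mul_cfc_eq_zero_of_mul_eq_zero {M A : Matrix ι ι ℂ} (hA : A.IsHermitian) (hMA : M * A = 0)
    {f : ℝ → ℝ} (hf : f 0 = 0) : M * cfc f A = 0 := by
  -- The factorisation also holds at `0` because `f 0 = 0 = 0 / 0`; its second factor need not be
  -- continuous, but the spectrum of a matrix is finite.
  have hfactor : f = fun x => x * (f x / x) := by
    funext x
    rcases eq_or_ne x 0 with rfl | hx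
    · simp [hf]
    · field_simp
  rw [hfactor, cfc_mul (fun x => x) (fun x => f x / x) A (by fun_prop)
    (A.finite_real_spectrum.continuousOn _), cfc_id' ℝ A hA.isSelfAdjoint, ← mul_assoc, hMA,
    zero_mul]

lemma posPart'_sub_absPart'_sub_posPart' (A : Matrix ι ι ℂ) (hA : A.IsHermitian) :
    posPart' A hA - (absPart' A hA - posPart' A hA) = A := by
  rw [sub_sub_eq_add_sub, ← absPart'_add_self, add_sub_cancel_left]

lemma mul_posPart'_eq_zero {M A : Matrix ι ι ℂ} (hA : A.IsHermitian) (hMA : M * A = 0) :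
    M * posPart' A hA = 0 := by
  rw [posPart'_eq_cfc]; exact mul_cfc_eq_zero_of_mul_eq_zero hA hMA (by simp)

lemma trace_mul_nonneg {P X : Matrix ι ι ℂ} (hP : 0 ≤ P) (hX : 0 ≤ X) : 0 ≤ (P * X).trace := by
  rw [← CFC.sqrt_mul_sqrt_self X hX, ← mul_assoc, trace_mul_comm, ← mul_assoc]
  exact ((CFC.sqrt_nonneg X).isSelfAdjoint.conjugate_nonneg hP).posSemidef.trace_nonneg

lemma trace_mul_le_trace_mul {P X Y : Matrix ι ι ℂ} (hP : 0 ≤ P) (hXY : X ≤ Y) :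
    (P * X).trace ≤ (P * Y).trace := by
  have := trace_mul_nonneg hP (sub_nonneg.2 hXY)
  rwa [mul_sub, trace_sub, sub_nonneg] at this

theorem trace_mul_conj_le_trace_posPart'_mul {Q A : Matrix ι ι ℂ} (hA : A.IsHermitian)
    (hQ₀ : 0 ≤ Q) (hQ₁ : Q ≤ 1) (hQA : Q * A = 0) (U : Matrix ι ι ℂ) :
    (Q * (U * A * Uᴴ)).trace ≤ (posPart' A hA * ((U - 1)ᴴ * (U - 1))).trace := by
  have hP := posPart'_nonneg A hA
  have hQP : Q * posPart' A hA = 0 := mul_posPart'_eq_zero hA hQA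
  have hPQ : posPart' A hA * Q = 0 := by
    have h := congrArg conjTranspose hQP
    rwa [conjTranspose_mul, conjTranspose_zero, hP.posSemidef.isHermitian.eq,
      hQ₀.posSemidef.isHermitian.eq] at h
  have hN : 0 ≤ U * (absPart' A hA - posPart' A hA) * Uᴴ :=
    star_right_conjugate_nonneg (sub_nonneg.2 (posPart'_le_absPart' A hA)) U
  have hX : 0 ≤ (U - 1) * posPart' A hA * (U - 1)ᴴ := star_right_conjugate_nonneg hP (U - 1)
  exact calc (Q * (U * A * Uᴴ)).trace
    _ = (Q * (U * posPart' A hA * Uᴴ)).trace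
          - (Q * (U * (absPart' A hA - posPart' A hA) * Uᴴ)).trace := by
        rw [← trace_sub, ← mul_sub, ← sub_mul, ← mul_sub, posPart'_sub_absPart'_sub_posPart']
    _ ≤ (Q * (U * posPart' A hA * Uᴴ)).trace := sub_le_self _ (trace_mul_nonneg hQ₀ hN)
    _ = (Q * ((U - 1) * posPart' A hA * (U - 1)ᴴ)).trace := by
        have hexpand : Q * ((U - 1) * posPart' A hA * (U - 1)ᴴ)
            = Q * (U * posPart' A hA * Uᴴ) - Q * U * posPart' A hA := by
          simp only [conjTranspose_sub, conjTranspose_one, sub_mul, mul_sub, one_mul, mul_one,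
            ← mul_assoc, hQP, zero_mul, sub_zero]
        rw [hexpand, trace_sub, trace_mul_comm (Q * U), ← mul_assoc (posPart' A hA), hPQ,
          zero_mul, trace_zero, sub_zero]
    _ ≤ ((U - 1) * posPart' A hA * (U - 1)ᴴ).trace := by
        simpa [trace_mul_comm _ Q] using trace_mul_le_trace_mul hX hQ₁
    _ = (posPart' A hA * ((U - 1)ᴴ * (U - 1))).trace := by rw [trace_mul_cycle, trace_mul_comm]

lemma trace_mul_absPart'_add_trace_mul (H A : Matrix ι ι ℂ) (hA : A.IsHermitian) :
    (H * absPart' A hA).trace + (H * A).trace = 2 * (H * posPart' A hA).trace := by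
  rw [← trace_add, ← mul_add, absPart'_add_self, mul_add, trace_add, two_mul]

lemma transpose_of_mem_unitaryGroup {v : ι → ι → ℂ}
    (hv : ∀ i j, star (v i) ⬝ᵥ v j = if i = j then 1 else 0) : (of v)ᵀ ∈ unitaryGroup ι ℂ := by
  rw [mem_unitaryGroup_iff']
  ext i j
  simpa [mul_apply, one_apply, dotProduct] using hv i j

lemma sum_smul_vecMulVec_eq_conjStarAlgAut {v : ι → ι → ℂ}
    (hv : ∀ i j, star (v i) ⬝ᵥ v j = if i = j then 1 else 0) (E : ι → ℂ) :
    ∑ n, E n • vecMulVec (v n) (star (v n)) =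
      conjStarAlgAut ℂ _ ⟨(of v)ᵀ, transpose_of_mem_unitaryGroup hv⟩ (diagonal E) := by
  ext i j
  rw [conjStarAlgAut_apply, mul_apply]
  simp [mul_diagonal, vecMulVec_apply, Matrix.sum_apply, mul_left_comm, mul_assoc]

section Conjugation

variable (u : unitary (Matrix ι ι ℂ))

lemma exp_smul_conjStarAlgAut_diagonal (c : ℂ) (f : ι → ℂ) :
    NormedSpace.exp (c • conjStarAlgAut ℂ _ u (diagonal f)) =
      conjStarAlgAut ℂ _ u (diagonal fun k => Complex.exp (c * f k)) := by
  have hinv : (u : Matrix ι ι ℂ)⁻¹ = star (u : Matrix ι ι ℂ) :=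
    inv_eq_left_inv (Unitary.coe_star_mul_self u)
  rw [← map_smul, conjStarAlgAut_apply, conjStarAlgAut_apply, ← hinv,
    Matrix.exp_conj _ _ Unitary.isUnit_coe, ← diagonal_smul, exp_diagonal]
  congr 3
  funext k
  rw [Pi.coe_exp, Pi.smul_apply, smul_eq_mul, ← Complex.exp_eq_exp_ℂ]

lemma star_conjStarAlgAut_diagonal_mul_self (g : ι → ℂ) :
    star (conjStarAlgAut ℂ _ u (diagonal g)) * conjStarAlgAut ℂ _ u (diagonal g) =
      conjStarAlgAut ℂ _ u (diagonal fun k => starRingEnd ℂ (g k) * g k) := by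
  rw [← map_star, ← map_mul, star_eq_conjTranspose, diagonal_conjTranspose, diagonal_mul_diagonal]
  rfl

lemma conjStarAlgAut_diagonal_mono {f g : ι → ℂ} (hfg : ∀ k, f k ≤ g k) :
    conjStarAlgAut ℂ _ u (diagonal f) ≤ conjStarAlgAut ℂ _ u (diagonal g) := by
  refine OrderHomClass.mono _ ?_
  rw [le_iff, diagonal_sub, posSemidef_diagonal_iff]
  exact fun k => sub_nonneg.2 (hfg k)

variable {u} {E : ι → ℝ} {t : ℝ} {H U : Matrix ι ι ℂ}
  (hH : H = conjStarAlgAut ℂ _ u (diagonal fun k => (E k : ℂ)))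
  (hU : U = NormedSpace.exp ((-(Complex.I * (t : ℂ))) • H))
include hH hU

lemma eq_conjStarAlgAut_diagonal_exp :
    U = conjStarAlgAut ℂ _ u (diagonal fun k => Complex.exp ((-(t * E k) : ℝ) * Complex.I)) := by
  rw [hU, hH, exp_smul_conjStarAlgAut_diagonal]
  congr 2
  funext k
  push_cast
  ring_nf

lemma conjTranspose_mul_self_of_eq_exp : Uᴴ * U = 1 := by
  rw [eq_conjStarAlgAut_diagonal_exp hH hU, ← star_eq_conjTranspose,
    star_conjStarAlgAut_diagonal_mul_self]
  simp only [Complex.conj_mul_self_exp_ofReal_mul_I, diagonal_one, map_one]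

lemma conjTranspose_sub_one_mul_le_of_eq_exp {c : ℝ}
    (hc : ∀ k, 2 - 2 * Real.cos (t * E k) ≤ c * E k) :
    (U - 1)ᴴ * (U - 1) ≤ (c : ℂ) • H := by
  rw [eq_conjStarAlgAut_diagonal_exp hH hU, hH, ← map_one (conjStarAlgAut ℂ _ u),
    ← map_sub, ← diagonal_one, diagonal_sub, ← star_eq_conjTranspose,
    star_conjStarAlgAut_diagonal_mul_self, ← map_smul, ← diagonal_smul]
  refine conjStarAlgAut_diagonal_mono u fun k => ?_
  rw [Complex.conj_mul_self_exp_sub_one, Pi.smul_apply, smul_eq_mul, ← Complex.ofReal_mul,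
    Complex.real_le_real, Real.cos_neg]
  exact hc k

end Conjugation

section Ancilla

variable {d : ℕ}

lemma ancProj_posSemidef (x : Fin 2) : (ancProj x).PosSemidef := by
  rw [ancProj, ← diagonal_single, posSemidef_diagonal_iff]
  intro i
  by_cases h : i = x <;> simp [h]

lemma ancProj_zero_add_ancProj_one : ancProj 0 + ancProj 1 = 1 := by
  ext i j
  fin_cases i <;> fin_cases j <;> simp [ancProj]

lemma trace_tilde (ρ : Matrix (Fin d) (Fin d) ℂ) : (tilde ρ).trace = ρ.trace := by
  rw [tilde, trace_kronecker, ancProj, trace_single_eq_same, mul_one]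

lemma one_kronecker_ancProj_one_mul_tilde (ρ : Matrix (Fin d) (Fin d) ℂ) :
    ((1 : Matrix (Fin d) (Fin d) ℂ) ⊗ₖ ancProj 1) * tilde ρ = 0 := by
  rw [tilde, ← mul_kronecker_mul, ancProj, ancProj, single_mul_single_of_ne _ _ _ _ (by decide),
    kronecker_zero]

lemma one_kronecker_ancProj_one_mul_smul_tilde_sub (a b : ℂ) (ρ σ : Matrix (Fin d) (Fin d) ℂ) :
    ((1 : Matrix (Fin d) (Fin d) ℂ) ⊗ₖ ancProj 1) * (a • tilde ρ - b • tilde σ) = 0 := by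
  simp only [mul_sub, Matrix.mul_smul, one_kronecker_ancProj_one_mul_tilde, smul_zero, sub_zero]

lemma one_kronecker_ancProj_zero_eq :
    (1 : Matrix (Fin d) (Fin d) ℂ) ⊗ₖ ancProj 0 =
      1 - (1 : Matrix (Fin d) (Fin d) ℂ) ⊗ₖ ancProj 1 := by
  rw [eq_sub_iff_add_eq, ← kronecker_add, ancProj_zero_add_ancProj_one, one_kronecker_one]

lemma one_kronecker_ancProj_one_nonneg : 0 ≤ (1 : Matrix (Fin d) (Fin d) ℂ) ⊗ₖ ancProj 1 :=
  (PosSemidef.one.kronecker (ancProj_posSemidef 1)).nonneg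

lemma one_kronecker_ancProj_one_le_one : (1 : Matrix (Fin d) (Fin d) ℂ) ⊗ₖ ancProj 1 ≤ 1 := by
  rw [le_iff, ← one_kronecker_ancProj_zero_eq]
  exact PosSemidef.one.kronecker (ancProj_posSemidef 0)

lemma success_probability_eq {U : Matrix (Fin d × Fin 2) (Fin d × Fin 2) ℂ} (hU : Uᴴ * U = 1)
    (ρmax ρmin : Matrix (Fin d) (Fin d) ℂ) (htrmax : ρmax.trace = 1) (pmax pmin : ℂ) :
    pmax * (((1 : Matrix (Fin d) (Fin d) ℂ) ⊗ₖ ancProj 0) * (U * tilde ρmax * Uᴴ)).trace +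
        pmin * (((1 : Matrix (Fin d) (Fin d) ℂ) ⊗ₖ ancProj 1) * (U * tilde ρmin * Uᴴ)).trace =
      pmax + (((1 : Matrix (Fin d) (Fin d) ℂ) ⊗ₖ ancProj 1) *
        (U * (pmin • tilde ρmin - pmax • tilde ρmax) * Uᴴ)).trace := by
  rw [one_kronecker_ancProj_zero_eq, sub_mul, one_mul, trace_sub, trace_mul_cycle, hU, one_mul,
    trace_tilde, htrmax]
  simp only [mul_sub, sub_mul, Matrix.mul_smul, Matrix.smul_mul, trace_sub, trace_smul, smul_eq_mul]
  ring

end Ancilla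

end MatrixOrder

open scoped Classical in
theorem two_state_avgEnergy_bound_general {d : ℕ}
    (ρmax ρmin : Matrix (Fin d) (Fin d) ℂ)
    (htrmax : ρmax.trace = 1)
    (pmax pmin : ℝ)
    (t : ℝ) (ht : 0 ≤ t)
    (E : Fin d × Fin 2 → ℝ) (hE : ∀ n, 0 ≤ E n)
    (v : Fin d × Fin 2 → Fin d × Fin 2 → ℂ)
    (hv : ∀ i j, star (v i) ⬝ᵥ v j = if i = j then 1 else 0)
    (H : Matrix (Fin d × Fin 2) (Fin d × Fin 2) ℂ)
    (hH : H = ∑ n, (E n : ℂ) • vecMulVec (v n) (star (v n)))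
    (U : Matrix (Fin d × Fin 2) (Fin d × Fin 2) ℂ)
    (hU : U = NormedSpace.exp ((-(Complex.I * (t : ℂ))) • H))
    (hA : ((pmin : ℂ) • tilde ρmin - (pmax : ℂ) • tilde ρmax).IsHermitian) :
    (pmax : ℂ) * (((1 : Matrix (Fin d) (Fin d) ℂ) ⊗ₖ ancProj 0) *
          (U * tilde ρmax * Uᴴ)).trace +
      (pmin : ℂ) * (((1 : Matrix (Fin d) (Fin d) ℂ) ⊗ₖ ancProj 1) *
          (U * tilde ρmin * Uᴴ)).trace ≤
    (pmax : ℂ) +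
      (((if ∃ n, 1 < t * E n ∧ t * E n < 4 then 5 / Real.pi else 3 / Real.pi) *
          t / 2 : ℝ) : ℂ) *
        ((H * absPart' ((pmin : ℂ) • tilde ρmin - (pmax : ℂ) • tilde ρmax) hA).trace +
          (pmin : ℂ) * (H * tilde ρmin).trace -
          (pmax : ℂ) * (H * tilde ρmax).trace) := by
  set γ := if ∃ n, 1 < t * E n ∧ t * E n < 4 then 5 / Real.pi else 3 / Real.pi
  have hHu := hH.trans (sum_smul_vecMulVec_eq_conjStarAlgAut hv _)
  have hγ : ∀ k, 2 - 2 * Real.cos (t * E k) ≤ γ * t * E k := fun k => by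
    rw [mul_assoc]; exact Real.two_sub_two_cos_le_ite_mul (fun n => mul_nonneg ht (hE n)) k
  have hHA : (H * ((pmin : ℂ) • tilde ρmin - (pmax : ℂ) • tilde ρmax)).trace =
      (pmin : ℂ) * (H * tilde ρmin).trace - (pmax : ℂ) * (H * tilde ρmax).trace := by
    simp only [mul_sub, Matrix.mul_smul, trace_sub, trace_smul, smul_eq_mul]
  rw [success_probability_eq (conjTranspose_mul_self_of_eq_exp hHu hU) ρmax ρmin htrmax,
    add_sub_assoc, ← hHA, trace_mul_absPart'_add_trace_mul]
  calc _ ≤ (pmax : ℂ) + (posPart' _ hA * ((U - 1)ᴴ * (U - 1))).trace := by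
        gcongr
        exact trace_mul_conj_le_trace_posPart'_mul hA one_kronecker_ancProj_one_nonneg
          one_kronecker_ancProj_one_le_one (one_kronecker_ancProj_one_mul_smul_tilde_sub _ _ _ _) U
    _ ≤ (pmax : ℂ) + (posPart' _ hA * (((γ * t : ℝ) : ℂ) • H)).trace := by
        gcongr
        exact trace_mul_le_trace_mul (posPart'_nonneg _ hA)
          (conjTranspose_sub_one_mul_le_of_eq_exp hHu hU hγ)
    _ = _ := by
        rw [Matrix.mul_smul, trace_smul, trace_mul_comm, smul_eq_mul]
        push_cast
        ring

open scoped Classical in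
/-- Average-energy bound for arbitrary priors (Theorem `avgEnergyTwoStates`):
`P_succ ≤ p_max + (γ t / 2)[tr(H |p_min ρ̃_min - p_max ρ̃_max|)
  + p_min tr(H ρ̃_min) - p_max tr(H ρ̃_max)]` with `ρ̃ₓ = ρₓ ⊗ |x_max⟩⟨x_max|`. -/
theorem two_state_avgEnergy_bound {d : ℕ}
    (ρmax ρmin : Matrix (Fin d) (Fin d) ℂ)
    (hρmax : ρmax.PosSemidef) (hρmin : ρmin.PosSemidef)
    (htrmax : ρmax.trace = 1) (htrmin : ρmin.trace = 1)
    (pmax pmin : ℝ) (h0 : 0 ≤ pmin) (hp : pmin ≤ pmax) (hsum : pmax + pmin = 1)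
    (t : ℝ) (ht : 0 ≤ t)
    (E : Fin d × Fin 2 → ℝ) (hE : ∀ n, 0 ≤ E n)
    (v : Fin d × Fin 2 → Fin d × Fin 2 → ℂ)
    (hv : ∀ i j, star (v i) ⬝ᵥ v j = if i = j then 1 else 0)
    (H : Matrix (Fin d × Fin 2) (Fin d × Fin 2) ℂ)
    (hH : H = ∑ n, (E n : ℂ) • vecMulVec (v n) (star (v n)))
    (U : Matrix (Fin d × Fin 2) (Fin d × Fin 2) ℂ)
    (hU : U = NormedSpace.exp ((-(Complex.I * (t : ℂ))) • H))
    (hA : ((pmin : ℂ) • tilde ρmin - (pmax : ℂ) • tilde ρmax).IsHermitian) :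
    (pmax : ℂ) * (((1 : Matrix (Fin d) (Fin d) ℂ) ⊗ₖ ancProj 0) *
          (U * tilde ρmax * Uᴴ)).trace +
      (pmin : ℂ) * (((1 : Matrix (Fin d) (Fin d) ℂ) ⊗ₖ ancProj 1) *
          (U * tilde ρmin * Uᴴ)).trace ≤
    (pmax : ℂ) +
      (((if ∃ n, 1 < t * E n ∧ t * E n < 4 then 5 / Real.pi else 3 / Real.pi) *
          t / 2 : ℝ) : ℂ) *
        ((H * absPart' ((pmin : ℂ) • tilde ρmin - (pmax : ℂ) • tilde ρmax) hA).trace +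
          (pmin : ℂ) * (H * tilde ρmin).trace -
          (pmax : ℂ) * (H * tilde ρmax).trace) :=
  two_state_avgEnergy_bound_general ρmax ρmin htrmax pmax pmin t ht E hE v hv H hH U hU hA
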